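/- For every compact linear operator T on an infinite-dimensional Hilbert space H mapping into a Banach space Y, the Weyl numbers and approximation numbers coincide: x_n(T : H → Y) = a_n(T : H → Y) for all n ∈ ℕ. -/

import Mathlib

open scoped ENNReal

instance : Fact ((1 : ℝ≥0∞) ≤ 2) := ⟨one_le_two⟩

/-- The sequence space `ℓ₂` of square-summable complex sequences. -/
noncomputable abbrev ellTwo : Type := lp (fun _ : ℕ => ℂ) 2

/-- The `n`-th approximation number: `a_n(T) = inf {‖T - F‖ : rank F < n}`. -/
noncomputable def approxNum {E F : Type*} [NormedAddCommGroup E] [NormedSpace ℂ E]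
    [NormedAddCommGroup F] [NormedSpace ℂ F] (T : E →L[ℂ] F) (n : ℕ) : ℝ :=
  sInf {r : ℝ | ∃ G : E →L[ℂ] F,
    Module.rank ℂ (LinearMap.range (G : E →ₗ[ℂ] F)) < (n : Cardinal) ∧ r = ‖T - G‖}

/-- The `n`-th Weyl number: `x_n(T) = sup {a_n(T ∘ A) : A : ℓ₂ → E, ‖A‖ ≤ 1}`. -/
noncomputable def weylNum {E F : Type*} [NormedAddCommGroup E] [NormedSpace ℂ E]
    [NormedAddCommGroup F] [NormedSpace ℂ F] (T : E →L[ℂ] F) (n : ℕ) : ℝ :=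
  sSup {r : ℝ | ∃ A : ellTwo →L[ℂ] E, ‖A‖ ≤ 1 ∧ r = approxNum (T.comp A) n}

/-!
The inequality `x_n(T) ≤ a_n(T)` holds for every operator, because `a_n` does not increase under
composition with a contraction. Conversely, given `ε > 0`, take a finite `ε/2`-net `t` of the image
of the unit ball under the compact operator `T`, a norming functional `φ_y` for each `y ∈ t`, and
let `K` be the span of the Riesz representatives of the `φ_y ∘ T`. On the unit ball of `Kᗮ` all
`φ_y ∘ T` vanish, which forces `‖T x‖ < ε`. The orthogonal projection onto the finite-dimensional
`K` factors as `A ∘ B` through `ℓ₂` with contractions (an orthonormal basis of `K` is exchanged with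
the first unit vectors of `ℓ₂`), whence `a_n(T) ≤ a_n(T A) + ‖T - T A B‖ ≤ x_n(T) + ε`.
-/

open InnerProductSpace

section ApproxNum

variable {E F W : Type*} [NormedAddCommGroup E] [NormedSpace ℂ E]
  [NormedAddCommGroup F] [NormedSpace ℂ F] [NormedAddCommGroup W] [NormedSpace ℂ W]

lemma approxNum_le_norm_sub (T : E →L[ℂ] F) {G : E →L[ℂ] F} {n : ℕ}
    (hG : LinearMap.rank (G : E →ₗ[ℂ] F) < n) : approxNum T n ≤ ‖T - G‖ :=
  csInf_le ⟨0, by rintro _ ⟨_, _, rfl⟩; exact norm_nonneg _⟩ ⟨G, hG, rfl⟩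

lemma approxNum_le_add_of_forall_exists {S : E →L[ℂ] F} {T : W →L[ℂ] F} {n : ℕ} {c : ℝ}
    (hc : 0 ≤ c)
    (h : ∀ G : W →L[ℂ] F, LinearMap.rank (G : W →ₗ[ℂ] F) < n →
      ∃ G' : E →L[ℂ] F, LinearMap.rank (G' : E →ₗ[ℂ] F) < n ∧ ‖S - G'‖ ≤ ‖T - G‖ + c) :
    approxNum S n ≤ approxNum T n + c := by
  rcases Nat.eq_zero_or_pos n with rfl | hn
  · -- for `n = 0` both infima are taken over the empty set, so both are `0`
    simpa [approxNum] using hc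
  rw [← sub_le_iff_le_add]
  refine le_csInf ⟨‖T‖, 0, by simpa using hn, by simp⟩ ?_
  rintro _ ⟨G, hG, rfl⟩
  obtain ⟨G', hG', hle⟩ := h G hG
  rw [sub_le_iff_le_add]
  exact (approxNum_le_norm_sub S hG').trans hle

lemma approxNum_comp_le (T : E →L[ℂ] F) {A : W →L[ℂ] E} (hA : ‖A‖ ≤ 1) (n : ℕ) :
    approxNum (T ∘L A) n ≤ approxNum T n := by
  simpa using approxNum_le_add_of_forall_exists (S := T ∘L A) (T := T) (n := n) le_rfl
    fun G hG => ⟨G ∘L A, (LinearMap.rank_comp_le_left _ _).trans_lt hG, by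
      rw [add_zero, ← ContinuousLinearMap.sub_comp]
      exact (ContinuousLinearMap.opNorm_comp_le _ _).trans
        (mul_le_of_le_one_right (norm_nonneg _) hA)⟩

lemma approxNum_le_comp_add (T : E →L[ℂ] F) (A : W →L[ℂ] E) {B : E →L[ℂ] W} (hB : ‖B‖ ≤ 1)
    {ε : ℝ} (hε : ‖T - T ∘L A ∘L B‖ ≤ ε) (n : ℕ) :
    approxNum T n ≤ approxNum (T ∘L A) n + ε := by
  refine approxNum_le_add_of_forall_exists ((norm_nonneg _).trans hε) fun G hG =>
    ⟨G ∘L B, (LinearMap.rank_comp_le_left _ _).trans_lt hG, ?_⟩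
  calc ‖T - G ∘L B‖ = ‖(T - T ∘L A ∘L B) + (T ∘L A - G) ∘L B‖ := by
        rw [ContinuousLinearMap.sub_comp, ContinuousLinearMap.comp_assoc, sub_add_sub_cancel]
    _ ≤ ε + ‖T ∘L A - G‖ * ‖B‖ :=
        norm_add_le_of_le hε (ContinuousLinearMap.opNorm_comp_le _ _)
    _ ≤ ‖T ∘L A - G‖ + ε := by
        rw [add_comm]; gcongr; exact mul_le_of_le_one_right (norm_nonneg _) hB

lemma weylNum_le_approxNum (T : E →L[ℂ] F) (n : ℕ) : weylNum T n ≤ approxNum T n :=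
  csSup_le ⟨_, 0, by simp, rfl⟩ fun _ ⟨_, hA, hr⟩ => hr ▸ approxNum_comp_le T hA n

lemma approxNum_comp_le_weylNum (T : E →L[ℂ] F) {A : ellTwo →L[ℂ] E} (hA : ‖A‖ ≤ 1) (n : ℕ) :
    approxNum (T ∘L A) n ≤ weylNum T n :=
  le_csSup ⟨approxNum T n, fun _ ⟨_, hA', hr⟩ => hr ▸ approxNum_comp_le T hA' n⟩ ⟨A, hA, rfl⟩

end ApproxNum

section RankOne

variable {𝕜 E F G ι : Type*} [RCLike 𝕜] [NormedAddCommGroup E] [InnerProductSpace 𝕜 E]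
  [NormedAddCommGroup F] [InnerProductSpace 𝕜 F] [NormedAddCommGroup G] [InnerProductSpace 𝕜 G]
  [Fintype ι]

lemma norm_sum_rankOne_le_one {u : ι → E} {v : ι → F} (hu : Orthonormal 𝕜 u)
    (hv : Orthonormal 𝕜 v) : ‖∑ i, rankOne 𝕜 (v i) (u i)‖ ≤ 1 := by
  refine ContinuousLinearMap.opNorm_le_bound _ zero_le_one fun x => ?_
  rw [one_mul, ← sq_le_sq₀ (norm_nonneg _) (norm_nonneg _)]
  have hsum := hv.orthogonalFamily.norm_sum (fun i => inner 𝕜 (u i) x) Finset.univ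
  simp only [LinearIsometry.toSpanSingleton_apply] at hsum
  simpa [hsum] using hu.sum_inner_products_le x (s := Finset.univ)

lemma sum_rankOne_comp_sum_rankOne (w : ι → G) {v : ι → F} (hv : Orthonormal 𝕜 v) (u : ι → E) :
    (∑ i, rankOne 𝕜 (w i) (v i)) ∘L (∑ j, rankOne 𝕜 (v j) (u j)) =
      ∑ i, rankOne 𝕜 (w i) (u i) := by
  classical
  simp [ContinuousLinearMap.finsetSum_comp, ContinuousLinearMap.comp_finsetSum,
    rankOne_comp_rankOne, orthonormal_iff_ite.1 hv]

end RankOne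

lemma exists_contractions_comp_eq_starProjection {E : Type*} [NormedAddCommGroup E]
    [InnerProductSpace ℂ E] (K : Submodule ℂ E) [FiniteDimensional ℂ K] :
    ∃ (A : ellTwo →L[ℂ] E) (B : E →L[ℂ] ellTwo),
      ‖A‖ ≤ 1 ∧ ‖B‖ ≤ 1 ∧ A ∘L B = K.starProjection := by
  let b := stdOrthonormalBasis ℂ K
  have hb : Orthonormal ℂ fun i => (b i : E) := b.orthonormal.comp_linearIsometry K.subtypeₗᵢ
  have he : Orthonormal ℂ fun i : Fin (Module.finrank ℂ K) =>
      (default : HilbertBasis ℕ ℂ ellTwo) i :=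
    (default : HilbertBasis ℕ ℂ ellTwo).orthonormal.comp _ Fin.val_injective
  exact ⟨_, _, norm_sum_rankOne_le_one he hb, norm_sum_rankOne_le_one hb he,
    (sum_rankOne_comp_sum_rankOne _ he _).trans (b.starProjection_eq_sum_rankOne).symm⟩

section Hilbert

variable {𝕜 H Y : Type*} [RCLike 𝕜] [NormedAddCommGroup H] [InnerProductSpace 𝕜 H]
  [NormedAddCommGroup Y] [NormedSpace 𝕜 Y]

lemma norm_sub_comp_starProjection_le {T : H →L[𝕜] Y} (K : Submodule 𝕜 H)
    [K.HasOrthogonalProjection] {δ : ℝ} (hδ : 0 ≤ δ) (h : ∀ x ∈ Kᗮ, ‖x‖ ≤ 1 → ‖T x‖ ≤ δ) :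
    ‖T - T ∘L K.starProjection‖ ≤ δ := by
  refine ContinuousLinearMap.opNorm_le_of_unit_norm hδ fun x hx => ?_
  rw [sub_apply, ContinuousLinearMap.comp_apply, ← map_sub, ← K.starProjection_orthogonal_val]
  exact h _ (Kᗮ.starProjection_apply_mem x) ((Kᗮ.norm_starProjection_apply_le x).trans_eq hx)

lemma IsCompactOperator.exists_finiteDimensional_norm_apply_lt [CompleteSpace H]
    {T : H →L[𝕜] Y} (hT : IsCompactOperator T) {δ : ℝ} (hδ : 0 < δ) :
    ∃ K : Submodule 𝕜 H, FiniteDimensional 𝕜 K ∧ ∀ x ∈ Kᗮ, ‖x‖ ≤ 1 → ‖T x‖ < δ := by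
  obtain ⟨t, -, ht, hcover⟩ := Metric.finite_approx_of_totallyBounded
    ((hT.isCompact_closure_image_closedBall 1).totallyBounded.subset subset_closure) (δ / 2)
    (half_pos hδ)
  choose φ hφ hφy using fun y : Y => exists_dual_vector'' 𝕜 y
  let v : Y → H := fun y => (toDual 𝕜 H).symm (φ y ∘L T)
  refine ⟨Submodule.span 𝕜 (v '' t), FiniteDimensional.span_of_finite 𝕜 (ht.image v),
    fun x hxK hx => ?_⟩
  obtain ⟨y, hyt, hxy⟩ : ∃ y ∈ t, dist (T x) y < δ / 2 := by
    simpa using hcover (Set.mem_image_of_mem _ (mem_closedBall_zero_iff.2 hx))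
  have hφx : φ y (T x) = 0 := by
    rw [← ContinuousLinearMap.comp_apply, ← toDual_symm_apply]
    exact Submodule.inner_right_of_mem_orthogonal
      (Submodule.subset_span (Set.mem_image_of_mem v hyt)) hxK
  have hy : ‖y‖ < δ / 2 :=
    calc ‖y‖ = ‖φ y (y - T x)‖ := by
          rw [map_sub, hφx, sub_zero, hφy, RCLike.norm_ofReal, abs_norm]
      _ ≤ ‖y - T x‖ := (φ y).le_of_opNorm_le (hφ y) _ |>.trans_eq (one_mul _)
      _ < δ / 2 := by rwa [← dist_eq_norm, dist_comm]
  calc ‖T x‖ ≤ dist (T x) y + ‖y‖ := by rw [dist_eq_norm]; exact norm_le_norm_sub_add _ _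
    _ < δ := by linarith

end Hilbert

theorem weylNum_eq_approxNum_of_hilbert_general
    {H Y : Type*} [NormedAddCommGroup H] [InnerProductSpace ℂ H] [CompleteSpace H]
    [NormedAddCommGroup Y] [NormedSpace ℂ Y]
    (T : H →L[ℂ] Y) (hT : IsCompactOperator (T : H → Y))
    (n : ℕ) :
    weylNum T n = approxNum T n := by
  refine le_antisymm (weylNum_le_approxNum T n) (le_of_forall_pos_le_add fun ε hε => ?_)
  obtain ⟨K, _, hK⟩ := hT.exists_finiteDimensional_norm_apply_lt hε
  obtain ⟨A, B, hA, hB, hAB⟩ := exists_contractions_comp_eq_starProjection K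
  have hTAB : ‖T - T ∘L A ∘L B‖ ≤ ε :=
    hAB ▸ norm_sub_comp_starProjection_le K hε.le fun x hxK hx => (hK x hxK hx).le
  calc approxNum T n ≤ approxNum (T ∘L A) n + ε := approxNum_le_comp_add T A hB hTAB n
    _ ≤ weylNum T n + ε := by gcongr; exact approxNum_comp_le_weylNum T hA n

/-- For a compact operator `T` from an infinite-dimensional Hilbert space `H` into a
Banach space `Y`, the Weyl numbers and the approximation numbers coincide:
`x_n(T) = a_n(T)` for all `n ≥ 1`. -/
theorem weylNum_eq_approxNum_of_hilbert
    {H Y : Type*} [NormedAddCommGroup H] [InnerProductSpace ℂ H] [CompleteSpace H]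
    [NormedAddCommGroup Y] [NormedSpace ℂ Y] [CompleteSpace Y]
    (hinf : ¬ FiniteDimensional ℂ H)
    (T : H →L[ℂ] Y) (hT : IsCompactOperator (T : H → Y))
    (n : ℕ) (hn : 1 ≤ n) :
    weylNum T n = approxNum T n :=
  weylNum_eq_approxNum_of_hilbert_general T hT n
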